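/- arXiv:1304.5839 — 2 statements merged into one kernel-verified Lean document; each statement's English description precedes it below -/
import Mathlib

section
/- With U the (n+1)×(n+1) matrix defined from z ∈ ℂ, |z| ≤ 1 (U₁₁ = z, U₂₁ = √(1-|z|²), U_{1,n+1} = √(1-|z|²), U_{2,n+1} = -conj(z), U_{k+1,k} = 1 for 2 ≤ k ≤ n, zeros elsewhere), the (1,1) entry of U^k equals z^k for every k = 0, 1, …, n. -/
open Matrix

noncomputable def sneakyU (n : ℕ) (z : ℂ) : Matrix (Fin (n + 1)) (Fin (n + 1)) ℂ :=
  fun i j =>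
    if i = 0 ∧ j = 0 then z
    else if i = 1 ∧ j = 0 then (Real.sqrt (1 - ‖z‖ ^ 2) : ℂ)
    else if i = 0 ∧ j = Fin.last n then (Real.sqrt (1 - ‖z‖ ^ 2) : ℂ)
    else if i = 1 ∧ j = Fin.last n then -(starRingEnd ℂ z)
    else if 2 ≤ (i : ℕ) ∧ (j : ℕ) + 1 = (i : ℕ) then 1
    else 0

/-!
Away from its last column, `sneakyU n z` sends `e₀` to `z e₀ + √(1 - ‖z‖²) e₁` and `eⱼ` to
`eⱼ₊₁` for `1 ≤ j < n`. So for `k < n` the vector `Uᵏ e₀` is supported on `e₀, …, eₖ`, never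
meets the last column, and equals `zᵏ e₀ + √(1 - ‖z‖²) (zᵏ⁻¹ e₁ + zᵏ⁻² e₂ + ⋯ + eₖ)`.
-/

namespace SneakyU

variable {n : ℕ} {z : ℂ}

lemma apply_zero_left {j : Fin (n + 1)} (hj : j ≠ Fin.last n) :
    sneakyU n z 0 j = if j = 0 then z else 0 := by
  by_cases h0 : j = 0 <;> simp [sneakyU, h0, hj]

lemma apply_of_val_eq_one {i j : Fin (n + 1)} (hi : (i : ℕ) = 1) (hj : j ≠ Fin.last n) :
    sneakyU n z i j = if j = 0 then (√(1 - ‖z‖ ^ 2) : ℂ) else 0 := by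
  have h0 : i ≠ 0 := by rintro rfl; simp at hi
  have h1 : i = 1 := Fin.ext (by rw [hi, Fin.val_one', Nat.mod_eq_of_lt]; omega)
  by_cases hj0 : j = 0 <;> simp [sneakyU, hj0, hj, h0, ← h1, hi]

lemma apply_of_two_le {i j : Fin (n + 1)} (hi : 2 ≤ (i : ℕ)) :
    sneakyU n z i j = if (j : ℕ) + 1 = i then 1 else 0 := by
  have h0 : i ≠ 0 := by rintro rfl; simp at hi
  have h1 : i ≠ 1 := by rintro rfl; have := Nat.mod_le 1 (n + 1); simp at hi; omega
  simp [sneakyU, h0, h1, hi]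

lemma mulVec_apply {v : Fin (n + 1) → ℂ} (hv : v (Fin.last n) = 0) (i : Fin (n + 1)) :
    (sneakyU n z *ᵥ v) i =
      if (i : ℕ) = 0 then z * v 0
      else if (i : ℕ) = 1 then √(1 - ‖z‖ ^ 2) * v 0
      else v ⟨i - 1, by omega⟩ := by
  have hlast (j : Fin (n + 1)) (hj : j ≠ Fin.last n → sneakyU n z i j = 0) :
      sneakyU n z i j * v j = 0 := by
    by_cases hl : j = Fin.last n
    · rw [hl, hv, mul_zero]
    · rw [hj hl, zero_mul]
  rw [mulVec, dotProduct]
  split_ifs with h0 h1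
  · obtain rfl : i = 0 := Fin.ext h0
    refine (Finset.sum_eq_single 0 (fun j _ hj => hlast j fun hl => ?_) (by simp)).trans ?_
    · simp [apply_zero_left hl, hj]
    · simp [sneakyU]
  · have hn : 1 ≤ n := by omega
    have h0l : (0 : Fin (n + 1)) ≠ Fin.last n := Fin.ext_iff.not.mpr (by simp; omega)
    refine (Finset.sum_eq_single 0 (fun j _ hj => hlast j fun hl => ?_) (by simp)).trans ?_
    · simp [apply_of_val_eq_one h1 hl, hj]
    · simp [apply_of_val_eq_one h1 h0l]
  · refine (Finset.sum_eq_single ⟨i - 1, by omega⟩ (fun j _ hj => ?_) (by simp)).trans ?_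
    · rw [apply_of_two_le (by omega), if_neg (fun h => hj (Fin.ext (by simp; omega))), zero_mul]
    · simp [apply_of_two_le (show 2 ≤ (i : ℕ) by omega), show (i : ℕ) - 1 + 1 = i by omega]

noncomputable def powCol (n : ℕ) (z : ℂ) (k : ℕ) : Fin (n + 1) → ℂ := fun i =>
  if (i : ℕ) = 0 then z ^ k
  else if (i : ℕ) ≤ k then √(1 - ‖z‖ ^ 2) * z ^ (k - i)
  else 0

lemma mulVec_powCol {k : ℕ} (hk : k < n) : sneakyU n z *ᵥ powCol n z k = powCol n z (k + 1) := by
  have hlast : powCol n z k (Fin.last n) = 0 := by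
    simp [powCol, show n ≠ 0 by omega, show ¬n ≤ k by omega]
  ext i
  rw [mulVec_apply hlast]
  rcases Nat.lt_or_ge (i : ℕ) 2 with hi | hi
  · obtain h | h : (i : ℕ) = 0 ∨ (i : ℕ) = 1 := by omega
    all_goals simp [powCol, h, pow_succ']
  · have hsub : k - (i - 1) = k + 1 - i := by omega
    simp [powCol, show (i : ℕ) ≠ 0 by omega, show (i : ℕ) ≠ 1 by omega,
      show (i : ℕ) - 1 ≠ 0 by omega, show (i : ℕ) - 1 ≤ k ↔ (i : ℕ) ≤ k + 1 by omega, hsub]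

lemma pow_mulVec_single_zero {k : ℕ} (hk : k ≤ n) :
    sneakyU n z ^ k *ᵥ Pi.single 0 1 = powCol n z k := by
  induction k with
  | zero =>
    ext i
    by_cases hi : i = 0 <;> simp [powCol, hi, Fin.val_eq_zero_iff]
  | succ k ih =>
    rw [pow_succ', ← mulVec_mulVec, ih (by omega), mulVec_powCol (by omega)]

end SneakyU

theorem sneakyU_pow_entry_general (n : ℕ) (z : ℂ)
    (k : ℕ) (hk : k ≤ n) :
    ((sneakyU n z) ^ k) 0 0 = z ^ k := by
  simpa [SneakyU.powCol] using congrFun (SneakyU.pow_mulVec_single_zero (z := z) hk) 0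

theorem sneakyU_pow_entry (n : ℕ) (hn : 1 ≤ n) (z : ℂ) (hz : ‖z‖ ≤ 1)
    (k : ℕ) (hk : k ≤ n) :
    ((sneakyU n z) ^ k) 0 0 = z ^ k :=
  sneakyU_pow_entry_general n z k hk
end

section
/- Let p be a complex polynomial of degree at most n, z ∈ ℂ with |z| ≤ 1, and U the (n+1)×(n+1) unitary matrix defined from z as above. Then p(z) equals the (1,1) entry of the matrix p(U) (p evaluated at U via its matrix powers). -/
open Matrix

/-!
`U` is upper Hessenberg, so `U ^ k` vanishes more than `k` places below the diagonal; in
particular `(U ^ k) (last n) 0 = 0` for `k < n`. The first row of `U` is `(z, 0, …, 0, s)`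
with `s = √(1 - |z|²)`, so
`(U ^ (k + 1)) 0 0 = z (U ^ k) 0 0 + s (U ^ k) (last n) 0 = z (U ^ k) 0 0` as long as `k < n`,
and `(U ^ k) 0 0 = z ^ k` for all `k ≤ n`. Evaluating `p` term by term gives the theorem.
-/

namespace Matrix

def IsUpperHessenberg {m : ℕ} {R : Type*} [Zero R] (A : Matrix (Fin m) (Fin m) R) : Prop :=
  ∀ i j : Fin m, (j : ℕ) + 1 < i → A i j = 0

theorem IsUpperHessenberg.pow_apply_eq_zero {m : ℕ} {R : Type*} [Semiring R]
    {A : Matrix (Fin m) (Fin m) R} (hA : A.IsUpperHessenberg) (k : ℕ) {i j : Fin m}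
    (hij : (j : ℕ) + k < i) : (A ^ k) i j = 0 := by
  induction k generalizing j with
  | zero => exact one_apply_ne' (Fin.ne_of_lt (by simpa using hij))
  | succ k ih =>
    rw [pow_succ, mul_apply]
    refine Finset.sum_eq_zero fun l _ => ?_
    by_cases hlj : (l : ℕ) ≤ j + 1
    · rw [ih (by omega), zero_mul]
    · rw [hA l j (by omega), mul_zero]

end Matrix

section sneakyU

variable {n : ℕ} {z : ℂ}

theorem sneakyU_isUpperHessenberg : (sneakyU n z).IsUpperHessenberg := by
  intro i j hij
  have hi0 : i ≠ 0 := by rintro rfl; simp at hij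
  have hi1 : i ≠ 1 := by
    rintro rfl
    rw [Fin.val_one'] at hij
    have := Nat.mod_le 1 (n + 1)
    omega
  simp [sneakyU, hi0, hi1]
  omega

theorem sneakyU_zero_apply_of_ne (j : Fin (n + 1)) (hj0 : j ≠ 0) (hjl : j ≠ Fin.last n) :
    sneakyU n z 0 j = 0 := by
  simp [sneakyU, hj0, hjl]

theorem sneakyU_pow_succ_apply_zero_zero {k : ℕ} (hk : k < n) :
    (sneakyU n z ^ (k + 1)) 0 0 = z * (sneakyU n z ^ k) 0 0 := by
  rw [pow_succ', mul_apply, Finset.sum_eq_single 0 (fun j _ hj0 => ?_) (by simp)]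
  · simp [sneakyU]
  by_cases hjl : j = Fin.last n
  · subst hjl
    rw [sneakyU_isUpperHessenberg.pow_apply_eq_zero k (by simpa using hk), mul_zero]
  · rw [sneakyU_zero_apply_of_ne j hj0 hjl, zero_mul]

theorem sneakyU_pow_apply_zero_zero {k : ℕ} (hk : k ≤ n) : (sneakyU n z ^ k) 0 0 = z ^ k := by
  induction k with
  | zero => simp
  | succ k ih => rw [sneakyU_pow_succ_apply_zero_zero hk, ih (by omega), pow_succ']

end sneakyU

theorem sneakyU_poly_entry_general (n : ℕ) (z : ℂ)
    (p : Polynomial ℂ) (hp : p.natDegree ≤ n) :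
    (Polynomial.aeval (sneakyU n z) p) 0 0 = p.eval z := by
  have hd : p.natDegree < n + 1 := Nat.lt_succ_of_le hp
  rw [Polynomial.aeval_eq_sum_range' hd, Polynomial.eval_eq_sum_range' hd, Matrix.sum_apply]
  refine Finset.sum_congr rfl fun k hk => ?_
  rw [Matrix.smul_apply, sneakyU_pow_apply_zero_zero (Finset.mem_range_succ_iff.mp hk), smul_eq_mul]

theorem sneakyU_poly_entry (n : ℕ) (hn : 1 ≤ n) (z : ℂ) (hz : ‖z‖ ≤ 1)
    (p : Polynomial ℂ) (hp : p.natDegree ≤ n) :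
    (Polynomial.aeval (sneakyU n z) p) 0 0 = p.eval z :=
  sneakyU_poly_entry_general n z p hp
end
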